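/- Let G be an ample Hausdorff groupoid with compact unit space. If B is a nonempty compact open bisection of G such that the indicator function 1_B lies in π(ℂF(G)), then B is a full bisection, i.e., B ∈ F(G). -/
import Mathlib


open scoped Classical

/-- A groupoid encoded as a "groupoid with zero": the partially defined composition is
totalised by declaring non-composable products to be `0`.  The actual groupoid elements are
the nonzero elements; the range and source of a nonzero `a` are `a * a⁻¹` and `a⁻¹ * a`. -/
class GroupoidZ (G : Type*) extends Mul G, Inv G, Zero G where
  zero_mul' : ∀ a : G, 0 * a = 0
  mul_zero' : ∀ a : G, a * 0 = 0
  inv_zero' : (0 : G)⁻¹ = 0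
  inv_inv' : ∀ a : G, a⁻¹⁻¹ = a
  mul_assoc' : ∀ a b c : G, a * b ≠ 0 → b * c ≠ 0 → a * b * c = a * (b * c)
  mul_ne_zero_iff' : ∀ a b : G, a ≠ 0 → b ≠ 0 → (a * b ≠ 0 ↔ a⁻¹ * a = b * b⁻¹)
  mul_inv_self_mul' : ∀ a : G, a * a⁻¹ * a = a
  mul_inv_rev' : ∀ a b : G, (a * b)⁻¹ = b⁻¹ * a⁻¹

/-- The unit space `G⁰`: the nonzero idempotents. -/
def unitSpace (G : Type*) [GroupoidZ G] : Set G := {e | e ≠ 0 ∧ e * e = e}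

/-- A bisection: a set of groupoid elements on which range and source are injective. -/
def IsBisection {G : Type*} [GroupoidZ G] (B : Set G) : Prop :=
  (0 : G) ∉ B ∧ (∀ a ∈ B, ∀ b ∈ B, a * a⁻¹ = b * b⁻¹ → a = b) ∧
    (∀ a ∈ B, ∀ b ∈ B, a⁻¹ * a = b⁻¹ * b → a = b)

/-- A set is full if its range and source images are the whole unit space. -/
def IsFull {G : Type*} [GroupoidZ G] (B : Set G) : Prop :=
  (fun a => a * a⁻¹) '' B = unitSpace G ∧ (fun a => a⁻¹ * a) '' B = unitSpace G

/-- Compact open bisection. -/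
def IsCOB {G : Type*} [GroupoidZ G] [TopologicalSpace G] (B : Set G) : Prop :=
  IsBisection B ∧ IsCompact B ∧ IsOpen B

/-- The product `AB = {αβ : (α,β) composable}` of two subsets of a groupoid. -/
def setMul {G : Type*} [GroupoidZ G] (A B : Set G) : Set G := Set.image2 (· * ·) A B \ {0}

/-- The inverse `B⁻¹ = {γ⁻¹ : γ ∈ B}` of a subset of a groupoid. -/
def setInv {G : Type*} [GroupoidZ G] (B : Set G) : Set G := Inv.inv '' B

/-- The topological full group `F(G)`: all full compact open bisections. -/
def fullBisections (G : Type*) [GroupoidZ G] [TopologicalSpace G] : Set (Set G) :=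
  {B | IsCOB B ∧ IsFull B}

/-- Indicator function `1_B : G → ℂ`. -/
noncomputable def indic {G : Type*} [GroupoidZ G] (B : Set G) : G → ℂ := Set.indicator B 1

/-- Convolution product on functions `G → ℂ`: `(f * g)(γ) = ∑_{αβ = γ} f(α) g(β)`. -/
noncomputable def convol {G : Type*} [GroupoidZ G] (f g : G → ℂ) : G → ℂ := fun γ =>
  if γ = 0 then 0 else ∑ᶠ p ∈ {p : G × G | p.1 * p.2 = γ}, f p.1 * g p.2

/-- The `*`-involution `f^*(γ) = conj (f (γ⁻¹))`. -/
noncomputable def starF {G : Type*} [GroupoidZ G] (f : G → ℂ) : G → ℂ := fun γ =>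
  (starRingEnd ℂ) (f γ⁻¹)

/-- An ample Hausdorff (étale) groupoid: Hausdorff, locally compact, continuous inversion
and (partial) multiplication, the unit space is open and closed, the range map is open,
and there is a basis of compact open bisections.  The adjoined `0` is an isolated point. -/
class AmpleGroupoid (G : Type*) [TopologicalSpace G] extends GroupoidZ G where
  t2' : T2Space G
  locallyCompact' : LocallyCompactSpace G
  isolated_zero' : IsOpen {(0 : G)}
  continuous_inv' : Continuous (fun a : G => a⁻¹)
  continuousOn_mul' : ContinuousOn (fun p : G × G => p.1 * p.2) {p : G × G | p.1 * p.2 ≠ 0}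
  isOpen_unitSpace' : IsOpen (unitSpace G)
  isClosed_unitSpace' : IsClosed (unitSpace G)
  isOpenMap_range' : ∀ B : Set G, IsOpen B → (0 : G) ∉ B → IsOpen ((fun a => a * a⁻¹) '' B)
  ample_basis' : ∀ (a : G) (U : Set G), a ≠ 0 → IsOpen U → a ∈ U →
    ∃ B : Set G, IsCOB B ∧ a ∈ B ∧ B ⊆ U

/-- The image `π(ℂF(G))` of the representation of the topological full group: the span of
the indicator functions of full compact open bisections. -/
noncomputable def spanFull (G : Type*) [GroupoidZ G] [TopologicalSpace G] :
    Submodule ℂ (G → ℂ) :=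
  Submodule.span ℂ {f | ∃ B ∈ fullBisections G, f = indic B}

/-- The Steinberg algebra `A(G)` (as a subspace of `G → ℂ`): the span of the indicator
functions of compact open bisections. -/
noncomputable def steinberg (G : Type*) [GroupoidZ G] [TopologicalSpace G] :
    Submodule ℂ (G → ℂ) :=
  Submodule.span ℂ {f | ∃ B : Set G, IsCOB B ∧ f = indic B}

section Aux

variable {G : Type*} [GroupoidZ G]

lemma gz_inv_ne_zero {a : G} (h : a ≠ 0) : a⁻¹ ≠ 0 := by
  intro h0
  apply h
  have h1 := GroupoidZ.inv_inv' a
  rw [h0, GroupoidZ.inv_zero'] at h1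
  exact h1.symm

lemma gz_mul_inv_ne_zero {a : G} (h : a ≠ 0) : a * a⁻¹ ≠ 0 := by
  intro h0
  apply h
  have h1 := GroupoidZ.mul_inv_self_mul' a
  rw [h0, GroupoidZ.zero_mul'] at h1
  exact h1.symm

lemma gz_range_mem {a : G} (h : a ≠ 0) : a * a⁻¹ ∈ unitSpace G := by
  refine ⟨gz_mul_inv_ne_zero h, ?_⟩
  have h1 : a * a⁻¹ * a ≠ 0 := by rw [GroupoidZ.mul_inv_self_mul']; exact h
  have h2 : a * a⁻¹ ≠ 0 := gz_mul_inv_ne_zero h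
  have h3 := GroupoidZ.mul_assoc' (a * a⁻¹) a a⁻¹ h1 h2
  rw [GroupoidZ.mul_inv_self_mul'] at h3
  exact h3.symm

lemma gz_source_mem {a : G} (h : a ≠ 0) : a⁻¹ * a ∈ unitSpace G := by
  have h1 := gz_range_mem (gz_inv_ne_zero h)
  rwa [GroupoidZ.inv_inv'] at h1

/-- Key counting lemma: if `1_B = ∑ cᵢ • 1_{Bᵢ}` where each `Bᵢ` is full and injective for a
"range-like" map `ρ`, and `B` is `ρ`-injective and nonempty, then `ρ '' B` covers the unit
space. -/
lemma key_counting (ρ : G → G) (n : ℕ) (c : Fin n → ℂ) (Bi : Fin n → Set G)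
    (hful : ∀ i, ρ '' Bi i = unitSpace G)
    (hinj : ∀ i, ∀ a ∈ Bi i, ∀ b ∈ Bi i, ρ a = ρ b → a = b)
    (B : Set G) (hBinj : ∀ a ∈ B, ∀ b ∈ B, ρ a = ρ b → a = b)
    (hBsub : ∀ a ∈ B, ρ a ∈ unitSpace G) (hBne : B.Nonempty)
    (heq : ∑ i, c i • indic (Bi i) = indic B) :
    unitSpace G ⊆ ρ '' B := by
  have hch : ∀ e ∈ unitSpace G, ∀ i, ∃ a, a ∈ Bi i ∧ ρ a = e := by
    intro e he i
    have h : e ∈ ρ '' Bi i := (hful i).symm ▸ he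
    obtain ⟨a, ha, hae⟩ := h
    exact ⟨a, ha, hae⟩
  have hpt : ∀ γ : G, indic B γ = ∑ i, c i * indic (Bi i) γ := by
    intro γ
    have h := congrFun heq γ
    simpa [Finset.sum_apply] using h.symm
  have hfib : ∀ (e : G) (S : Finset G), (∀ γ ∈ S, ρ γ = e) →
      (∀ i, ∃ a ∈ S, a ∈ Bi i) → ∑ γ ∈ S, indic B γ = ∑ i, c i := by
    intro e S hSe hrep
    have h1 : ∀ i, ∑ γ ∈ S, indic (Bi i) γ = 1 := by
      intro i
      obtain ⟨a, haS, haB⟩ := hrep i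
      rw [Finset.sum_eq_single_of_mem a haS]
      · simp [indic, Set.indicator_apply, haB]
      · intro b hbS hba
        have hb : b ∉ Bi i := by
          intro hbB
          exact hba (hinj i b hbB a haB (by rw [hSe b hbS, hSe a haS]))
        simp [indic, Set.indicator_apply, hb]
    calc ∑ γ ∈ S, indic B γ = ∑ γ ∈ S, ∑ i, c i * indic (Bi i) γ :=
          Finset.sum_congr rfl fun γ _ => hpt γ
      _ = ∑ i, ∑ γ ∈ S, c i * indic (Bi i) γ := Finset.sum_comm
      _ = ∑ i, c i * ∑ γ ∈ S, indic (Bi i) γ := by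
          simp [Finset.mul_sum]
      _ = ∑ i, c i := by simp [h1]
  obtain ⟨a₀, ha₀⟩ := hBne
  have he₀ : ρ a₀ ∈ unitSpace G := hBsub a₀ ha₀
  choose f₀ hf₀B hf₀e using fun i => hch (ρ a₀) he₀ i
  set S₀ : Finset G := insert a₀ (Finset.image f₀ Finset.univ) with hS₀def
  have hS₀e : ∀ γ ∈ S₀, ρ γ = ρ a₀ := by
    intro γ hγ
    rcases Finset.mem_insert.mp hγ with h | h
    · rw [h]
    · obtain ⟨i, -, rfl⟩ := Finset.mem_image.mp h
      exact hf₀e i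
  have hrep₀ : ∀ i, ∃ a ∈ S₀, a ∈ Bi i := fun i =>
    ⟨f₀ i, Finset.mem_insert_of_mem (Finset.mem_image_of_mem _ (Finset.mem_univ i)), hf₀B i⟩
  have hsum₀ : ∑ γ ∈ S₀, indic B γ = ∑ i, c i := hfib _ S₀ hS₀e hrep₀
  have hone : ∑ γ ∈ S₀, indic B γ = 1 := by
    rw [Finset.sum_eq_single_of_mem a₀ (Finset.mem_insert_self _ _)]
    · simp [indic, Set.indicator_apply, ha₀]
    · intro b hbS hba
      have hb : b ∉ B := fun hbB => hba (hBinj b hbB a₀ ha₀ (hS₀e b hbS))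
      simp [indic, Set.indicator_apply, hb]
  have hc1 : ∑ i, c i = 1 := by rw [← hsum₀]; exact hone
  intro e he
  by_contra hne
  choose f hfB hfe using fun i => hch e he i
  set S : Finset G := Finset.image f Finset.univ with hSdef
  have hSe : ∀ γ ∈ S, ρ γ = e := by
    intro γ hγ
    obtain ⟨i, -, rfl⟩ := Finset.mem_image.mp hγ
    exact hfe i
  have hrep : ∀ i, ∃ a ∈ S, a ∈ Bi i := fun i =>
    ⟨f i, Finset.mem_image_of_mem _ (Finset.mem_univ i), hfB i⟩
  have h0 : ∑ γ ∈ S, indic B γ = 0 := by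
    apply Finset.sum_eq_zero
    intro γ hγ
    have hb : γ ∉ B := fun hγB => hne ⟨γ, hγB, hSe γ hγ⟩
    simp [indic, Set.indicator_apply, hb]
  have hcontr := hfib e S hSe hrep
  rw [h0, hc1] at hcontr
  exact zero_ne_one hcontr

end Aux

/-- If `B` is a nonempty compact open bisection with `1_B ∈ π(ℂF(G))`,
then `B` is full, i.e. `B ∈ F(G)`. -/
theorem full_of_indicator_mem_rep_image {G : Type*} [TopologicalSpace G] [AmpleGroupoid G]
    (hcomp : IsCompact (unitSpace G)) (B : Set G) (hB : IsCOB B) (hBne : B.Nonempty)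
    (hmem : indic B ∈ spanFull G) : IsFull B := by
  classical
  obtain ⟨n, c, g, hg⟩ := Submodule.mem_span_set'.mp hmem
  choose Bi hBimem hBieq using fun i : Fin n => (g i).2
  have heq : ∑ i, c i • indic (Bi i) = indic B := by
    rw [← hg]
    exact Finset.sum_congr rfl fun i _ => by rw [hBieq i]
  have hne0 : ∀ a ∈ B, a ≠ (0 : G) := fun a ha h0 => hB.1.1 (h0 ▸ ha)
  constructor
  · apply Set.Subset.antisymm
    · rintro _ ⟨a, haB, rfl⟩
      exact gz_range_mem (hne0 a haB)
    · exact key_counting (fun a => a * a⁻¹) n c Bi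
        (fun i => (hBimem i).2.1)
        (fun i a ha b hb h => (hBimem i).1.1.2.1 a ha b hb h)
        B (fun a ha b hb h => hB.1.2.1 a ha b hb h)
        (fun a ha => gz_range_mem (hne0 a ha)) hBne heq
  · apply Set.Subset.antisymm
    · rintro _ ⟨a, haB, rfl⟩
      exact gz_source_mem (hne0 a haB)
    · exact key_counting (fun a => a⁻¹ * a) n c Bi
        (fun i => (hBimem i).2.2)
        (fun i a ha b hb h => (hBimem i).1.1.2.2 a ha b hb h)
        B (fun a ha b hb h => hB.1.2.2 a ha b hb h)
        (fun a ha => gz_source_mem (hne0 a ha)) hBne heq
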